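/- Let L ≥ 3 be an integer, let ψ_ℓ : ℝ → ℝ for each ℓ ∈ [L], let d, n ∈ ℕ, set m_0 = d, and let m_1, …, m_L ∈ ℕ. For each ℓ ∈ [L−1] let u_ℓ ∈ ℝ^{m_ℓ} and define W_ℓ = e_1 u_ℓᵀ ∈ ℝ^{m_{ℓ-1} × m_ℓ} (the matrix whose first row is u_ℓᵀ and whose other rows are zero, so that W_ℓᵀ = u_ℓ e_1ᵀ). Let c_ℓ ∈ ℝ be the first entry of u_ℓ for each ℓ ∈ [L−2]. Let W_L ∈ ℝ^{m_{L-1} × m_L}, v ∈ ℝ^{m_L}, and X ∈ ℝ^{d×n}. Then vᵀ ψ_L(W_Lᵀ ψ_{L-1}(W_{L-1}ᵀ ⋯ ψ_1(W_1ᵀ X) ⋯)) = vᵀ ψ_L(W_Lᵀ ψ_{L-1}(u_{L-1} ψ_{L-2}(c_{L-2} ⋯ ψ_2(c_2 ψ_1(c_1 e_1ᵀ X)) ⋯))), where e_1 denotes the first standard coordinate vector of the appropriate dimension. In other words, with rank-one weight matrices of this form, the L-hidden-layer network coincides with a network whose first L−2 hidden layers each have width one, with scalar weights c_1, …, c_{L-2}.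 -/

import Mathlib

/-! Since only the first row of `W ℓ` is nonzero, layer `ℓ + 1` sees layer `ℓ` only through
its first entry, scaled by `u ℓ`; following the first entries down the network gives the
width-one stack with weights `c ℓ = u ℓ 0`. -/

open scoped BigOperators

/-- The hidden layers of a feedforward neural network (without biases),
applied column-wise to the data matrix `X ∈ ℝ^{m 0 × n}`. -/
noncomputable def hiddenNB (m : ℕ → ℕ) (ψ : ℕ → ℝ → ℝ)
    (W : (ℓ : ℕ) → Matrix (Fin (m ℓ)) (Fin (m (ℓ + 1))) ℝ) (n : ℕ) :
    (L : ℕ) → (Fin (m 0) → Fin n → ℝ) → Fin (m L) → Fin n → ℝ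
  | 0, X => X
  | L + 1, X => fun j i => ψ L (∑ s, W L s j * hiddenNB m ψ W n L X s i)

/-- The width-one stack `ψ_{k+1}(c_{k+1} ψ_k(c_k ⋯ ψ_1(c_1 t) ⋯))` (with
`ψ`, `c` zero-indexed), applied entrywise to a row vector `t ∈ ℝ^{1×n}`. -/
noncomputable def sclStack (ψ : ℕ → ℝ → ℝ) (c : ℕ → ℝ) {n : ℕ}
    (t : Fin n → ℝ) : ℕ → Fin n → ℝ
  | 0 => fun i => ψ 0 (c 0 * t i)
  | k + 1 => fun i => ψ (k + 1) (c (k + 1) * sclStack ψ c t k i)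

theorem Matrix.sum_mul_of_firstRow {R : Type*} [NonUnitalNonAssocSemiring R] {p q : ℕ}
    (hp : 0 < p) (W : Matrix (Fin p) (Fin q) R) (u : Fin q → R)
    (hW : ∀ i j, W i j = if (i : ℕ) = 0 then u j else 0) (f : Fin p → R) (j : Fin q) :
    ∑ s, W s j * f s = u j * f ⟨0, hp⟩ := by
  rw [Fintype.sum_eq_single ⟨0, hp⟩ fun s hs => by simp [hW, Fin.ext_iff.not.mp hs]]
  simp [hW]

section FirstRowWeights

variable {m : ℕ → ℕ} {ψ : ℕ → ℝ → ℝ} {W : (ℓ : ℕ) → Matrix (Fin (m ℓ)) (Fin (m (ℓ + 1))) ℝ}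
  {n : ℕ} {u : (ℓ : ℕ) → Fin (m (ℓ + 1)) → ℝ}

theorem hiddenNB_succ_of_firstRow
    (hW : ∀ ℓ i j, W ℓ i j = if (i : ℕ) = 0 then u ℓ j else 0)
    (ℓ : ℕ) (hℓ : 0 < m ℓ) (X : Fin (m 0) → Fin n → ℝ) (j : Fin (m (ℓ + 1))) (i : Fin n) :
    hiddenNB m ψ W n (ℓ + 1) X j i = ψ ℓ (u ℓ j * hiddenNB m ψ W n ℓ X ⟨0, hℓ⟩ i) :=
  congrArg (ψ ℓ) (Matrix.sum_mul_of_firstRow hℓ (W ℓ) (u ℓ) (hW ℓ) _ j)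

theorem hiddenNB_firstRow_eq_sclStack
    (hW : ∀ ℓ i j, W ℓ i j = if (i : ℕ) = 0 then u ℓ j else 0) (c : ℕ → ℝ)
    (X : Fin (m 0) → Fin n → ℝ) (i : Fin n) (k : ℕ) (hpos : ∀ ℓ, ℓ ≤ k + 1 → 0 < m ℓ)
    (hc : ∀ ℓ (h : ℓ ≤ k), c ℓ = u ℓ ⟨0, hpos (ℓ + 1) (by omega)⟩) :
    hiddenNB m ψ W n (k + 1) X ⟨0, hpos (k + 1) le_rfl⟩ i =
      sclStack ψ c (X ⟨0, hpos 0 (by omega)⟩) k i := by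
  induction k with
  | zero =>
    rw [hiddenNB_succ_of_firstRow hW 0 (hpos 0 (by omega)), ← hc 0 le_rfl]
    rfl
  | succ k ih =>
    rw [hiddenNB_succ_of_firstRow hW (k + 1) (hpos (k + 1) (by omega)),
      ih (fun ℓ h => hpos ℓ (by omega)) (fun ℓ h => hc ℓ (by omega)), ← hc (k + 1) le_rfl]
    rfl

end FirstRowWeights

/-- Lemma 5.1.  Here `L = K + 3 ≥ 3`.  The activations are
`ψ 0, …, ψ (K+2)` (i.e. `ψ_1, …, ψ_L`), the rank-one weight matrices are
`W ℓ = e_1 (u ℓ)ᵀ ∈ ℝ^{m ℓ × m (ℓ+1)}` for the first `L−1` layers (i.e.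
paper `W_ℓ = e_1 u_ℓᵀ` for `ℓ ∈ [L−1]`), `c ℓ` is the first entry of `u ℓ`,
`WL` is the last weight matrix, and `v` the output weights.  Then the network
equals the network whose first `L−2` hidden layers have width one with scalar
weights `c 0, …, c K` (paper `c_1, …, c_{L−2}`). -/
theorem stmt11 (K : ℕ) (ψ : ℕ → ℝ → ℝ) (n : ℕ)
    (m : ℕ → ℕ) (hmpos : ∀ ℓ, ℓ ≤ K + 3 → 0 < m ℓ)
    (u : (ℓ : ℕ) → Fin (m (ℓ + 1)) → ℝ)
    (W : (ℓ : ℕ) → Matrix (Fin (m ℓ)) (Fin (m (ℓ + 1))) ℝ)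
    (hW : ∀ (ℓ : ℕ) (i : Fin (m ℓ)) (j : Fin (m (ℓ + 1))),
      W ℓ i j = if (i : ℕ) = 0 then u ℓ j else 0)
    (c : ℕ → ℝ)
    (hc : ∀ ℓ (h : ℓ ≤ K), c ℓ = u ℓ ⟨0, hmpos (ℓ + 1) (by omega)⟩)
    (WL : Matrix (Fin (m (K + 2))) (Fin (m (K + 3))) ℝ)
    (v : Fin (m (K + 3)) → ℝ) (X : Fin (m 0) → Fin n → ℝ) :
    ∀ i : Fin n,
      (∑ j, v j * ψ (K + 2) (∑ s, WL s j * hiddenNB m ψ W n (K + 2) X s i)) =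
      ∑ j, v j * ψ (K + 2) (∑ s, WL s j *
        ψ (K + 1) (u (K + 1) s *
          sclStack ψ c (fun i' => X ⟨0, hmpos 0 (by omega)⟩ i') K i)) := by
  intro i
  have hstack := hiddenNB_firstRow_eq_sclStack (ψ := ψ) hW c X i K
    (fun ℓ h => hmpos ℓ (by omega)) hc
  simp_rw [hiddenNB_succ_of_firstRow hW (K + 1) (hmpos (K + 1) (by omega)), hstack]
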